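/- arXiv:1301.1256 — 6 statements merged into one kernel-verified Lean document; each statement's English description precedes it below -/
import Mathlib

section
/- Let 0 ≤ e ≤ 1/2 and let g be any graphon with e(g) = e and t(g) = 0. Then I(g) ≥ I₀(2e)/2. -/
open MeasureTheory Real Set Filter

noncomputable section

/-- `I₀(u) = (1/2)[u ln u + (1-u) ln(1-u)]`, with the convention `log 0 = 0`
    giving `I₀(0) = I₀(1) = 0`. -/
def I0 (u : ℝ) : ℝ := (u * Real.log u + (1 - u) * Real.log (1 - u)) / 2

/-- `I₀'(u) = (1/2)[ln u − ln(1−u)]`. -/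
def I0d (u : ℝ) : ℝ := (Real.log u - Real.log (1 - u)) / 2

/-- `I₀''(u) = (1/2)[1/u + 1/(1−u)]`. -/
def I0dd (u : ℝ) : ℝ := (1 / u + 1 / (1 - u)) / 2

/-- A graphon: a measurable, symmetric function `[0,1]² → [0,1]`
    (here defined on all of `ℝ²`, with values used only on `[0,1]²`). -/
def IsGraphon (g : ℝ → ℝ → ℝ) : Prop :=
  Measurable (Function.uncurry g) ∧ (∀ x y, g x y = g y x) ∧ ∀ x y, g x y ∈ Icc (0 : ℝ) 1

/-- The edge density `e(g) = ∫₀¹∫₀¹ g(x,y) dx dy`. -/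
def edgeDensity (g : ℝ → ℝ → ℝ) : ℝ :=
  ∫ x in Icc (0 : ℝ) 1, ∫ y in Icc (0 : ℝ) 1, g x y

/-- The triangle density `t(g) = ∫₀¹∫₀¹∫₀¹ g(x,y) g(y,z) g(z,x) dx dy dz`. -/
def triangleDensity (g : ℝ → ℝ → ℝ) : ℝ :=
  ∫ x in Icc (0 : ℝ) 1, ∫ y in Icc (0 : ℝ) 1, ∫ z in Icc (0 : ℝ) 1, g x y * g y z * g z x

/-- The rate function `I(g) = ∫₀¹∫₀¹ I₀(g(x,y)) dx dy`. -/
def rate (g : ℝ → ℝ → ℝ) : ℝ :=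
  ∫ x in Icc (0 : ℝ) 1, ∫ y in Icc (0 : ℝ) 1, I0 (g x y)

/-- Lebesgue measure restricted to `[0,1]`. -/
def unitMeasure : Measure ℝ := volume.restrict (Icc (0 : ℝ) 1)

/-- Two graphons are equivalent if they agree a.e. after composing with
    measure-preserving maps of `[0,1]`. -/
def GraphonEquiv (f g : ℝ → ℝ → ℝ) : Prop :=
  ∃ σ σ' : ℝ → ℝ, MeasurePreserving σ unitMeasure unitMeasure ∧
    MeasurePreserving σ' unitMeasure unitMeasure ∧
    ∀ᵐ p ∂(unitMeasure.prod unitMeasure), f (σ p.1) (σ p.2) = g (σ' p.1) (σ' p.2)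

end


/-!
Let `s` be the indicator of the support of `g`. As `t(g) = 0`, `s` is triangle-free almost
everywhere, so Goodman's bound `e(s) (2 e(s) - 1) ≤ t(s) = 0` (paths `x - z - y` versus triangles on
`xy`, plus Cauchy–Schwarz on the degrees) gives Mantel's bound `e(s) ≤ 1/2`. For `u₀ ∈ (0,1)`, the
tangent line of the convex `I₀` at `u₀`, used only where `s = 1`, gives
`I(g) ≥ I₀'(u₀) e + log (1 - u₀) e(s) / 2 ≥ (2e log u₀ + (1 - 2e) log (1 - u₀)) / 4`.
The right side tends to `I₀(2e)/2` as `u₀ → 2e`, including at the endpoints `e = 0` and `e = 1/2`.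
-/

open Function ProbabilityTheory Topology

section Integration

variable {α β γ : Type*} [MeasurableSpace α] [MeasurableSpace β] [MeasurableSpace γ]
  {μ : Measure α} {ν : Measure β} {ρ : Measure γ}

theorem Measurable.integrable_of_mem_Icc [IsFiniteMeasure μ] {f : α → ℝ} (hf : Measurable f)
    {a b : ℝ} (h : ∀ x, f x ∈ Icc a b) : Integrable f μ :=
  .of_mem_Icc a b hf.aemeasurable (ae_of_all _ h)

theorem integral_mem_unitInterval [IsProbabilityMeasure μ] {f : α → ℝ}
    (h : ∀ x, f x ∈ Icc (0 : ℝ) 1) : ∫ x, f x ∂μ ∈ Icc (0 : ℝ) 1 :=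
  ⟨integral_nonneg fun x => (h x).1, by
    simpa using integral_mono_of_nonneg (ae_of_all _ fun x => (h x).1)
      (integrable_const (μ := μ) (1 : ℝ)) (ae_of_all _ fun x => (h x).2)⟩

theorem sq_integral_le_integral_sq [IsProbabilityMeasure μ] {f : α → ℝ} (hf : MemLp f 2 μ) :
    (∫ x, f x ∂μ) ^ 2 ≤ ∫ x, f x ^ 2 ∂μ := by
  have := variance_nonneg f μ
  rw [variance_eq_sub hf] at this
  simpa [sub_nonneg] using this

theorem integral_integral_mono [SFinite μ] [SFinite ν] {F G : α → β → ℝ}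
    (hF : Integrable (uncurry F) (μ.prod ν)) (hG : Integrable (uncurry G) (μ.prod ν))
    (h : ∀ x y, F x y ≤ G x y) :
    ∫ x, ∫ y, F x y ∂ν ∂μ ≤ ∫ x, ∫ y, G x y ∂ν ∂μ := by
  rw [integral_integral hF, integral_integral hG]
  exact integral_mono hF hG fun p => h p.1 p.2

theorem integral_integral_integral [SFinite μ] [SFinite ν] [SFinite ρ] {K : α → β → γ → ℝ}
    (hK : Integrable (fun q : (α × β) × γ => K q.1.1 q.1.2 q.2) ((μ.prod ν).prod ρ)) :
    ∫ x, ∫ y, ∫ z, K x y z ∂ρ ∂ν ∂μ = ∫ q, K q.1.1 q.1.2 q.2 ∂((μ.prod ν).prod ρ) := by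
  rw [integral_prod _ hK]
  exact integral_integral (f := fun x y => ∫ z, K x y z ∂ρ) hK.integral_prod_left

theorem integrable_triangle [IsFiniteMeasure μ] {W : α → α → ℝ} (hW : Measurable (uncurry W))
    (hW01 : ∀ x y, W x y ∈ Icc (0 : ℝ) 1) :
    Integrable (fun q : (α × α) × α => W q.1.1 q.1.2 * W q.1.2 q.2 * W q.2 q.1.1)
      ((μ.prod μ).prod μ) :=
  (((hW.comp measurable_fst).mul
    (hW.comp ((measurable_snd.comp measurable_fst).prodMk measurable_snd))).mul
      (hW.comp (measurable_snd.prodMk (measurable_fst.comp measurable_fst)))).integrable_of_mem_Icc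
    fun _ => unitInterval.mul_mem (unitInterval.mul_mem (hW01 _ _) (hW01 _ _)) (hW01 _ _)

end Integration

section SupportKernel

variable {α : Type*} {W : α → α → ℝ}

noncomputable def supportKernel (W : α → α → ℝ) (x y : α) : ℝ := if 0 < W x y then 1 else 0

theorem supportKernel_mem_Icc (x y : α) : supportKernel W x y ∈ Icc (0 : ℝ) 1 := by
  unfold supportKernel; split_ifs <;> simp

theorem supportKernel_symm (hWsymm : ∀ x y, W x y = W y x) (x y : α) :
    supportKernel W x y = supportKernel W y x := by
  simp only [supportKernel, hWsymm x y]

theorem measurable_supportKernel [MeasurableSpace α] (hW : Measurable (uncurry W)) :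
    Measurable (uncurry (supportKernel W)) :=
  Measurable.ite (measurableSet_lt measurable_const hW) measurable_const measurable_const

end SupportKernel

theorem I0_eq_neg_binEntropy (u : ℝ) : I0 u = -binEntropy u / 2 := by
  simp only [I0, binEntropy, log_inv]
  ring

theorem continuous_I0 : Continuous I0 := by
  simp only [funext I0_eq_neg_binEntropy]
  fun_prop

theorem I0_mem_Icc {u : ℝ} (hu : u ∈ Icc (0 : ℝ) 1) : I0 u ∈ Icc (-(log 2 / 2)) 0 := by
  rw [I0_eq_neg_binEntropy]
  constructor <;> linarith [binEntropy_nonneg hu.1 hu.2, binEntropy_le_log_two (p := u)]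

theorem mul_log_sub_log_le {a b : ℝ} (ha : 0 ≤ a) (hb : 0 < b) :
    a * (log b - log a) ≤ b - a := by
  rcases ha.eq_or_lt with rfl | ha
  · simpa using hb.le
  have h := log_le_sub_one_of_pos (div_pos hb ha)
  rw [log_div hb.ne' ha.ne'] at h
  calc a * (log b - log a) ≤ a * (b / a - 1) := mul_le_mul_of_nonneg_left h ha.le
    _ = b - a := by field_simp

-- The tangent line of the convex `I0` at `u₀`, replaced at `u = 0` by `0 = I0 0`.
theorem I0d_mul_add_le_I0 {u₀ u : ℝ} (hu₀ : u₀ ∈ Ioo (0 : ℝ) 1) (hu : u ∈ Icc (0 : ℝ) 1) :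
    I0d u₀ * u + log (1 - u₀) / 2 * (if 0 < u then 1 else 0) ≤ I0 u := by
  split_ifs with hpos
  · have h₁ := mul_log_sub_log_le hu.1 hu₀.1
    have h₂ := mul_log_sub_log_le (sub_nonneg.2 hu.2) (sub_pos.2 hu₀.2)
    simp only [I0d, I0]
    nlinarith
  · simp [le_antisymm (not_lt.1 hpos) hu.1, I0]

theorem continuousAt_const_mul_log_self (c : ℝ) : ContinuousAt (fun u => c * log u) c := by
  rcases eq_or_ne c 0 with rfl | hc
  · simpa using continuousAt_const
  · exact continuousAt_const.mul (continuousAt_log hc)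

section Kernel

variable {α : Type*} [MeasurableSpace α] {μ : Measure α} {W : α → α → ℝ}

noncomputable def kernelDegree (μ : Measure α) (W : α → α → ℝ) (x : α) : ℝ := ∫ y, W x y ∂μ

theorem measurable_kernelDegree [SFinite μ] (hW : Measurable (uncurry W)) :
    Measurable (kernelDegree μ W) :=
  hW.stronglyMeasurable.integral_prod_right.measurable

variable [IsProbabilityMeasure μ]

theorem kernelDegree_mem_Icc (hW01 : ∀ x y, W x y ∈ Icc (0 : ℝ) 1) (x : α) :
    kernelDegree μ W x ∈ Icc (0 : ℝ) 1 :=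
  integral_mem_unitInterval (hW01 x)

theorem mul_kernelDegree_add_sub_one_le (hW : Measurable (uncurry W))
    (hW01 : ∀ x y, W x y ∈ Icc (0 : ℝ) 1) (hWsymm : ∀ x y, W x y = W y x) (x y : α) :
    W x y * (kernelDegree μ W x + kernelDegree μ W y - 1) ≤ ∫ z, W x y * W y z * W z x ∂μ := by
  have iWx : ∀ x, Integrable (W x) μ := fun x =>
    (hW.comp measurable_prodMk_left).integrable_of_mem_Icc (hW01 x)
  have iWxyz : Integrable (fun z => W x y * W y z * W z x) μ :=
    ((measurable_const.mul (hW.comp measurable_prodMk_left)).mul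
      (hW.comp (measurable_id.prodMk measurable_const))).integrable_of_mem_Icc fun z =>
        unitInterval.mul_mem (unitInterval.mul_mem (hW01 _ _) (hW01 _ _)) (hW01 _ _)
  calc W x y * (kernelDegree μ W x + kernelDegree μ W y - 1)
      = ∫ z, W x y * (W x z + W y z - 1) ∂μ := by
        have iWxy : Integrable (fun z => W x z + W y z) μ := (iWx x).add (iWx y)
        rw [integral_const_mul, integral_sub iWxy (integrable_const 1),
          integral_add (iWx x) (iWx y)]
        simp [kernelDegree]
    _ ≤ ∫ z, W x y * W y z * W z x ∂μ := by
        refine integral_mono ((((iWx x).add (iWx y)).sub (integrable_const 1)).const_mul _)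
          iWxyz fun z => ?_
        -- `a (b + c - 1) ≤ a b c` on `[0, 1]`, as `a b c - a (b + c - 1) = a (1 - b) (1 - c)`
        rw [hWsymm z x]
        nlinarith [mul_nonneg (mul_nonneg (hW01 x y).1 (sub_nonneg.2 (hW01 x z).2))
          (sub_nonneg.2 (hW01 y z).2)]

theorem integral_integral_mul_kernelDegree_add_sub_one (hW : Measurable (uncurry W))
    (hW01 : ∀ x y, W x y ∈ Icc (0 : ℝ) 1) (hWsymm : ∀ x y, W x y = W y x) :
    ∫ x, ∫ y, W x y * (kernelDegree μ W x + kernelDegree μ W y - 1) ∂μ ∂μ =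
      2 * ∫ x, kernelDegree μ W x ^ 2 ∂μ - ∫ x, kernelDegree μ W x ∂μ := by
  set d := kernelDegree μ W
  have hd := measurable_kernelDegree (μ := μ) hW
  have iW : Integrable (uncurry W) (μ.prod μ) :=
    hW.integrable_of_mem_Icc fun p => hW01 p.1 p.2
  have iWdx : Integrable (fun p : α × α => W p.1 p.2 * d p.1) (μ.prod μ) :=
    (hW.mul (hd.comp measurable_fst)).integrable_of_mem_Icc fun p =>
      unitInterval.mul_mem (hW01 _ _) (kernelDegree_mem_Icc hW01 _)
  have iWdy : Integrable (fun p : α × α => W p.1 p.2 * d p.2) (μ.prod μ) :=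
    (hW.mul (hd.comp measurable_snd)).integrable_of_mem_Icc fun p =>
      unitInterval.mul_mem (hW01 _ _) (kernelDegree_mem_Icc hW01 _)
  have hx : ∫ x, ∫ y, W x y * d x ∂μ ∂μ = ∫ x, d x ^ 2 ∂μ := by
    congr 1 with x
    rw [integral_mul_const, sq]
    rfl
  have hy : ∫ x, ∫ y, W x y * d y ∂μ ∂μ = ∫ x, d x ^ 2 ∂μ := by
    rw [integral_integral_swap iWdy, ← hx]
    simp only [hWsymm _ _]
  have hsplit : ∫ x, ∫ y, W x y * (d x + d y - 1) ∂μ ∂μ =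
      ∫ x, ∫ y, (W x y * d x + W x y * d y) - uncurry W (x, y) ∂μ ∂μ := by
    congr 1; ext x; congr 1; ext y; simp only [uncurry_apply_pair]; ring
  have iWdxy : Integrable (fun p : α × α => W p.1 p.2 * d p.1 + W p.1 p.2 * d p.2)
      (μ.prod μ) := iWdx.add iWdy
  rw [hsplit, integral_integral_sub iWdxy iW, integral_integral_add iWdx iWdy, hx, hy]
  simp only [uncurry_apply_pair, d, kernelDegree]
  ring

theorem goodman_bound (hW : Measurable (uncurry W)) (hW01 : ∀ x y, W x y ∈ Icc (0 : ℝ) 1)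
    (hWsymm : ∀ x y, W x y = W y x) :
    (∫ x, ∫ y, W x y ∂μ ∂μ) * (2 * ∫ x, ∫ y, W x y ∂μ ∂μ - 1) ≤
      ∫ x, ∫ y, ∫ z, W x y * W y z * W z x ∂μ ∂μ ∂μ := by
  have hd01 := kernelDegree_mem_Icc (μ := μ) hW01
  set d := kernelDegree μ W
  have hjensen : (∫ x, d x ∂μ) ^ 2 ≤ ∫ x, d x ^ 2 ∂μ :=
    sq_integral_le_integral_sq (MemLp.of_bound (measurable_kernelDegree hW).aestronglyMeasurable 1
      (ae_of_all _ fun x => by simpa [abs_of_nonneg (hd01 x).1] using (hd01 x).2))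
  have iPaths : Integrable (uncurry fun x y => W x y * (d x + d y - 1)) (μ.prod μ) :=
    (hW.mul (((measurable_kernelDegree hW).comp measurable_fst).add
      ((measurable_kernelDegree hW).comp measurable_snd) |>.sub_const 1)).integrable_of_mem_Icc
      (a := -1) (b := 1) fun p => by
        show W p.1 p.2 * (d p.1 + d p.2 - 1) ∈ Icc (-1) 1
        obtain ⟨h0, h1⟩ := hW01 p.1 p.2
        obtain ⟨hx0, hx1⟩ := hd01 p.1
        obtain ⟨hy0, hy1⟩ := hd01 p.2
        constructor <;> nlinarith
  calc (∫ x, d x ∂μ) * (2 * ∫ x, d x ∂μ - 1)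
      ≤ ∫ x, ∫ y, W x y * (d x + d y - 1) ∂μ ∂μ := by
        rw [integral_integral_mul_kernelDegree_add_sub_one hW hW01 hWsymm]; nlinarith
    _ ≤ _ := integral_integral_mono iPaths
        (by exact (integrable_triangle hW hW01).integral_prod_left)
        (mul_kernelDegree_add_sub_one_le hW hW01 hWsymm)

theorem triangle_integral_supportKernel_eq_zero (hW : Measurable (uncurry W))
    (hW01 : ∀ x y, W x y ∈ Icc (0 : ℝ) 1)
    (ht : ∫ x, ∫ y, ∫ z, W x y * W y z * W z x ∂μ ∂μ ∂μ = 0) :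
    ∫ x, ∫ y, ∫ z, supportKernel W x y * supportKernel W y z * supportKernel W z x
      ∂μ ∂μ ∂μ = 0 := by
  have iT := integrable_triangle (μ := μ) hW hW01
  rw [integral_integral_integral iT] at ht
  rw [integral_integral_integral
    (integrable_triangle (measurable_supportKernel hW) supportKernel_mem_Icc)]
  have hT0 := (integral_eq_zero_iff_of_nonneg (fun q => mul_nonneg (mul_nonneg
    (hW01 _ _).1 (hW01 _ _).1) (hW01 _ _).1) iT).mp ht
  refine integral_eq_zero_of_ae (hT0.mono fun q hq => ?_)
  simp only [Pi.zero_apply, mul_eq_zero] at hq ⊢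
  rcases hq with (h | h) | h <;> simp [supportKernel, h]

theorem integral_supportKernel_le_half (hW : Measurable (uncurry W))
    (hW01 : ∀ x y, W x y ∈ Icc (0 : ℝ) 1) (hWsymm : ∀ x y, W x y = W y x)
    (ht : ∫ x, ∫ y, ∫ z, W x y * W y z * W z x ∂μ ∂μ ∂μ = 0) :
    ∫ x, ∫ y, supportKernel W x y ∂μ ∂μ ≤ 1 / 2 := by
  have h := goodman_bound (μ := μ) (measurable_supportKernel hW) supportKernel_mem_Icc
    (supportKernel_symm hWsymm)
  rw [triangle_integral_supportKernel_eq_zero hW hW01 ht] at h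
  have h0 : 0 ≤ ∫ x, ∫ y, supportKernel W x y ∂μ ∂μ :=
    integral_nonneg fun x => integral_nonneg fun y => (supportKernel_mem_Icc x y).1
  nlinarith

theorem tangent_lower_bound_integral_I0 (hW : Measurable (uncurry W))
    (hW01 : ∀ x y, W x y ∈ Icc (0 : ℝ) 1) {u₀ : ℝ} (hu₀ : u₀ ∈ Ioo (0 : ℝ) 1) :
    I0d u₀ * ∫ x, ∫ y, W x y ∂μ ∂μ + log (1 - u₀) / 2 * ∫ x, ∫ y, supportKernel W x y ∂μ ∂μ ≤
      ∫ x, ∫ y, I0 (W x y) ∂μ ∂μ := by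
  have iW : Integrable (fun p : α × α => W p.1 p.2) (μ.prod μ) :=
    hW.integrable_of_mem_Icc fun p => hW01 p.1 p.2
  have iS : Integrable (fun p : α × α => supportKernel W p.1 p.2) (μ.prod μ) :=
    (measurable_supportKernel hW).integrable_of_mem_Icc fun p => supportKernel_mem_Icc p.1 p.2
  have iI : Integrable (fun p : α × α => I0 (W p.1 p.2)) (μ.prod μ) :=
    (continuous_I0.measurable.comp hW).integrable_of_mem_Icc fun p => I0_mem_Icc (hW01 p.1 p.2)
  calc _ = ∫ p, I0d u₀ * W p.1 p.2 + log (1 - u₀) / 2 * supportKernel W p.1 p.2 ∂(μ.prod μ) := by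
        rw [integral_add (iW.const_mul _) (iS.const_mul _), integral_const_mul, integral_const_mul,
          integral_integral iW, integral_integral iS]
    _ ≤ ∫ p, I0 (W p.1 p.2) ∂(μ.prod μ) := integral_mono ((iW.const_mul _).add (iS.const_mul _))
        iI fun p => I0d_mul_add_le_I0 hu₀ (hW01 p.1 p.2)
    _ = _ := (integral_integral (f := fun x y => I0 (W x y)) iI).symm

end Kernel

instance : IsProbabilityMeasure (volume.restrict (Icc (0 : ℝ) 1)) := ⟨by simp⟩

/-- if `0 ≤ e ≤ 1/2` and `g` is a graphon with `e(g) = e` and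
    `t(g) = 0`, then `I(g) ≥ I₀(2e)/2`. -/
theorem rate_lower_bound_on_flat_scallop (e : ℝ) (he0 : 0 ≤ e) (he : e ≤ 1 / 2)
    (g : ℝ → ℝ → ℝ) (hg : IsGraphon g) (hge : edgeDensity g = e)
    (hgt : triangleDensity g = 0) :
    rate g ≥ I0 (2 * e) / 2 := by
  obtain ⟨hmeas, hsymm, h01⟩ := hg
  have hmantel :=
    integral_supportKernel_le_half (μ := volume.restrict (Icc 0 1)) hmeas h01 hsymm hgt
  set φ : ℝ → ℝ := fun u => (2 * e * log u + (1 - 2 * e) * log (1 - u)) / 4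
  have hbound : ∀ u ∈ Ioo (0 : ℝ) 1, φ u ≤ rate g := fun u hu => by
    have h := tangent_lower_bound_integral_I0 (μ := volume.restrict (Icc 0 1)) hmeas h01 hu
    unfold edgeDensity at hge
    rw [hge] at h
    have hlog : log (1 - u) ≤ 0 := log_nonpos (by linarith [hu.2]) (by linarith [hu.1])
    simp only [φ, I0d, rate] at h ⊢
    nlinarith [mul_le_mul_of_nonpos_left hmantel hlog]
  have hφ : ContinuousAt φ (2 * e) :=
    ((continuousAt_const_mul_log_self _).add ((continuousAt_const_mul_log_self (1 - 2 * e)).comp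
      (continuousAt_const.sub continuousAt_id))).div_const 4
  have : (𝓝[Ioo 0 1] (2 * e)).NeBot := mem_closure_iff_nhdsWithin_neBot.mp
    (by rw [closure_Ioo zero_ne_one]; constructor <;> linarith)
  calc I0 (2 * e) / 2 = φ (2 * e) := by simp only [φ, I0]; ring
    _ ≤ rate g := le_of_tendsto (hφ.tendsto.mono_left nhdsWithin_le_nhds)
        (eventually_nhdsWithin_of_forall hbound)
end

section
/- Let 0 ≤ e ≤ 1/2 and define the graphon g₀ by g₀(x,y) = 2e if x < 1/2 < y or y < 1/2 < x, and g₀(x,y) = 0 otherwise. Then e(g₀) = e, t(g₀) = 0, and I(g₀) = I₀(2e)/2. -/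
open MeasureTheory Real Set Filter

/-- The bipartite-type graphon taking value `a` on
    `{x < 1/2 < y} ∪ {y < 1/2 < x}` and `0` elsewhere. -/
noncomputable def bip (a : ℝ) : ℝ → ℝ → ℝ := fun x y =>
  if (x < 1 / 2 ∧ 1 / 2 < y) ∨ (y < 1 / 2 ∧ 1 / 2 < x) then a else 0

section Bip

variable {a : ℝ}

lemma setIntegral_Icc_indicator_Ioi {c : ℝ} (hc₀ : 0 ≤ c) (hc₁ : c ≤ 1) :
    ∫ y in Icc (0 : ℝ) 1, (Ioi c).indicator (fun _ => a) y = (1 - c) * a := by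
  have hset : Icc (0 : ℝ) 1 ∩ Ioi c = Ioc c 1 := by
    ext y; simp only [mem_inter_iff, mem_Icc, mem_Ioi, mem_Ioc]; constructor
    · rintro ⟨⟨-, h₁⟩, h₂⟩; exact ⟨h₂, h₁⟩
    · rintro ⟨h₁, h₂⟩; exact ⟨⟨by linarith, h₂⟩, h₁⟩
  rw [setIntegral_indicator measurableSet_Ioi, hset, setIntegral_const, Real.volume_real_Ioc,
    max_eq_left (by linarith), smul_eq_mul]

lemma setIntegral_Icc_indicator_Iio {c : ℝ} (hc₀ : 0 ≤ c) (hc₁ : c ≤ 1) :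
    ∫ y in Icc (0 : ℝ) 1, (Iio c).indicator (fun _ => a) y = c * a := by
  have hset : Icc (0 : ℝ) 1 ∩ Iio c = Ico 0 c := by
    ext y; simp only [mem_inter_iff, mem_Icc, mem_Iio, mem_Ico]; constructor
    · rintro ⟨⟨h₀, -⟩, h₁⟩; exact ⟨h₀, h₁⟩
    · rintro ⟨h₀, h₁⟩; exact ⟨⟨h₀, by linarith⟩, h₁⟩
  rw [setIntegral_indicator measurableSet_Iio, hset, setIntegral_const, Real.volume_real_Ico,
    max_eq_left (by linarith), smul_eq_mul, sub_zero]

lemma bip_of_lt_half {x : ℝ} (hx : x < 1 / 2) (y : ℝ) :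
    bip a x y = (Ioi (1 / 2)).indicator (fun _ => a) y := by
  refine if_congr ⟨?_, fun hy => Or.inl ⟨hx, hy⟩⟩ rfl rfl
  rintro (⟨-, hy⟩ | ⟨-, hx'⟩)
  exacts [hy, (lt_asymm hx hx').elim]

lemma bip_of_half_lt {x : ℝ} (hx : 1 / 2 < x) (y : ℝ) :
    bip a x y = (Iio (1 / 2)).indicator (fun _ => a) y := by
  refine if_congr ⟨?_, fun hy => Or.inr ⟨hy, hx⟩⟩ rfl rfl
  rintro (⟨hx', -⟩ | ⟨hy, -⟩)
  exacts [(lt_asymm hx hx').elim, hy]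

lemma setIntegral_bip_of_ne_half {x : ℝ} (hx : x ≠ 1 / 2) :
    ∫ y in Icc (0 : ℝ) 1, bip a x y = a / 2 := by
  rcases hx.lt_or_gt with hx | hx
  · simp_rw [bip_of_lt_half hx]
    rw [setIntegral_Icc_indicator_Ioi (by norm_num) (by norm_num)]; ring
  · simp_rw [bip_of_half_lt hx]
    rw [setIntegral_Icc_indicator_Iio (by norm_num) (by norm_num)]; ring

lemma apply_bip {f : ℝ → ℝ} (hf : f 0 = 0) (x y : ℝ) : f (bip a x y) = bip (f a) x y := by
  unfold bip; split_ifs <;> simp [hf]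

/-- The support of `bip a` is a complete bipartite graph, so it contains no triangle. -/
lemma bip_mul_bip_mul_bip (x y z : ℝ) : bip a x y * bip a y z * bip a z x = 0 := by
  unfold bip
  split_ifs with hxy hyz hzx
  · exfalso
    rcases hxy with ⟨_, _⟩ | ⟨_, _⟩ <;> rcases hyz with ⟨_, _⟩ | ⟨_, _⟩ <;>
      rcases hzx with ⟨_, _⟩ | ⟨_, _⟩ <;> linarith
  all_goals simp only [mul_zero, zero_mul]

lemma measurable_uncurry_bip : Measurable (Function.uncurry (bip a)) := by
  have hS : MeasurableSet {p : ℝ × ℝ | (p.1 < 1 / 2 ∧ 1 / 2 < p.2) ∨ (p.2 < 1 / 2 ∧ 1 / 2 < p.1)} :=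
    ((measurableSet_lt measurable_fst measurable_const).inter
        (measurableSet_lt measurable_const measurable_snd)).union
      ((measurableSet_lt measurable_snd measurable_const).inter
        (measurableSet_lt measurable_const measurable_fst))
  exact Measurable.ite hS measurable_const measurable_const

lemma bip_comm (x y : ℝ) : bip a x y = bip a y x := if_congr or_comm rfl rfl

lemma isGraphon_bip (ha : a ∈ Icc (0 : ℝ) 1) : IsGraphon (bip a) := by
  refine ⟨measurable_uncurry_bip, bip_comm, fun x y => ?_⟩
  unfold bip; split_ifs
  exacts [ha, ⟨le_rfl, zero_le_one⟩]

lemma edgeDensity_bip : edgeDensity (bip a) = a / 2 := by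
  have h_ae : ∀ᵐ x ∂volume.restrict (Icc (0 : ℝ) 1), ∫ y in Icc (0 : ℝ) 1, bip a x y = a / 2 := by
    refine ae_restrict_of_ae ?_
    filter_upwards [compl_mem_ae_iff.mpr (measure_singleton (1 / 2 : ℝ))] with x hx
    exact setIntegral_bip_of_ne_half hx
  rw [edgeDensity, integral_congr_ae h_ae, setIntegral_const, Real.volume_real_Icc_of_le zero_le_one]
  simp

lemma triangleDensity_bip : triangleDensity (bip a) = 0 := by
  simp only [triangleDensity, bip_mul_bip_mul_bip, integral_zero]

lemma rate_bip : rate (bip a) = I0 a / 2 := by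
  have hI0 : I0 0 = 0 := by simp [I0]
  simp only [rate, apply_bip hI0]
  exact edgeDensity_bip

end Bip

/-- for `0 ≤ e ≤ 1/2`, the graphon `g₀` equal to `2e` on
    `{x < 1/2 < y} ∪ {y < 1/2 < x}` and `0` elsewhere satisfies
    `e(g₀) = e`, `t(g₀) = 0`, and `I(g₀) = I₀(2e)/2`. -/
theorem flat_scallop_minimizer (e : ℝ) (he0 : 0 ≤ e) (he : e ≤ 1 / 2) :
    IsGraphon (bip (2 * e)) ∧ edgeDensity (bip (2 * e)) = e ∧
      triangleDensity (bip (2 * e)) = 0 ∧ rate (bip (2 * e)) = I0 (2 * e) / 2 := by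
  refine ⟨isGraphon_bip ⟨by linarith, by linarith⟩, ?_, triangleDensity_bip, rate_bip⟩
  rw [edgeDensity_bip]; ring
end

section
/- Let ℓ ≥ 2 be an integer, let e ∈ [1 − 1/ℓ, 1 − 1/(ℓ+1)], let c = (ℓ + √(ℓ(ℓ − e(ℓ+1))))/(ℓ(ℓ+1)), and let p = 4c(1 − ℓc)/(1 − (ℓ−1)c)². Define the graphon g₀ by: g₀(x,y) = 1 if x < kc < y or y < kc < x for some integer k with 1 ≤ k ≤ ℓ−1; g₀(x,y) = p if (ℓ−1)c < x < [1 + (ℓ−1)c]/2 < y or (ℓ−1)c < y < [1 + (ℓ−1)c]/2 < x; and g₀(x,y) = 0 otherwise. Then e(g₀) = e, ∫∫∫_{[(ℓ−1)c,1]³} g₀(x,y) g₀(y,z) g₀(z,x) dx dy dz = 0, and I(g₀) = ((1 − (ℓ−1)c)²/2)·I₀(p). -/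
/-! Up to null sets, `g₀` is a step function: on each of the first `ℓ − 1` bands of width `c`
it is `1` off the diagonal block, and on the corner `[(ℓ−1)c, 1]²` it is a balanced bipartite
block of height `p`. Every row integral is therefore a sum of three lengths. Since
`I₀(0) = I₀(1) = 0`, `I₀ ∘ g₀` has the same pattern with the values `0` and `I₀(p)`, so a single
computation gives both `e(g₀)` and `I(g₀)`. The edge density comes out as `2ℓc − ℓ(ℓ+1)c²`, which
is `e` because `c` is the larger root of that quadratic; the choice of `p` makes the corner
contribute exactly `2c(1 − ℓc)`. The corner being bipartite, two vertices of every triangle in it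
lie on the same side, where `g₀` vanishes. -/

open MeasureTheory Real Set Filter

open Classical in
/-- The optimizing multipartite graphon on the `ℓ`-th scallop: `1` across the
    first `ℓ−1` parts, a balanced bipartite block of height `p` in the corner
    `[(ℓ−1)c, 1]²`, and `0` elsewhere. -/
noncomputable def gScallop (ℓ : ℕ) (c p : ℝ) : ℝ → ℝ → ℝ := fun x y =>
  if ∃ k : ℕ, 1 ≤ k ∧ k ≤ ℓ - 1 ∧
      ((x < (k : ℝ) * c ∧ (k : ℝ) * c < y) ∨ (y < (k : ℝ) * c ∧ (k : ℝ) * c < x)) then 1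
  else if (((ℓ : ℝ) - 1) * c < x ∧ x < (1 + ((ℓ : ℝ) - 1) * c) / 2 ∧
            (1 + ((ℓ : ℝ) - 1) * c) / 2 < y) ∨
          (((ℓ : ℝ) - 1) * c < y ∧ y < (1 + ((ℓ : ℝ) - 1) * c) / 2 ∧
            (1 + ((ℓ : ℝ) - 1) * c) / 2 < x) then p
  else 0

section StepFunctions

variable {f : ℝ → ℝ} {u v C : ℝ}

lemma intervalIntegrable_of_eqOn_Ioo (huv : u ≤ v) (h : ∀ y ∈ Ioo u v, f y = C) :
    IntervalIntegrable f volume u v := by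
  rw [intervalIntegrable_iff_integrableOn_Ioc_of_le huv, integrableOn_Ioc_iff_integrableOn_Ioo]
  exact (integrableOn_const measure_Ioo_lt_top.ne).congr_fun (fun y hy => (h y hy).symm)
    measurableSet_Ioo

lemma intervalIntegral_eq_of_eqOn_Ioo (huv : u ≤ v) (h : ∀ y ∈ Ioo u v, f y = C) :
    ∫ y in u..v, f y = C * (v - u) := by
  rw [intervalIntegral.integral_of_le huv, integral_Ioc_eq_integral_Ioo,
    setIntegral_congr_fun measurableSet_Ioo h, setIntegral_const, Real.volume_real_Ioo_of_le huv,
    smul_eq_mul, mul_comm]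

lemma integral_Icc_eq_of_two_steps {t₀ t₁ t₂ C₁ C₂ : ℝ} (h₀₁ : t₀ ≤ t₁) (h₁₂ : t₁ ≤ t₂)
    (hf₁ : ∀ y ∈ Ioo t₀ t₁, f y = C₁) (hf₂ : ∀ y ∈ Ioo t₁ t₂, f y = C₂) :
    ∫ y in Icc t₀ t₂, f y = C₁ * (t₁ - t₀) + C₂ * (t₂ - t₁) := by
  rw [integral_Icc_eq_integral_Ioc, ← intervalIntegral.integral_of_le (h₀₁.trans h₁₂),
    ← intervalIntegral.integral_add_adjacent_intervals (intervalIntegrable_of_eqOn_Ioo h₀₁ hf₁)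
      (intervalIntegrable_of_eqOn_Ioo h₁₂ hf₂),
    intervalIntegral_eq_of_eqOn_Ioo h₀₁ hf₁, intervalIntegral_eq_of_eqOn_Ioo h₁₂ hf₂]

lemma integral_Icc_eq_of_three_steps {t₀ t₁ t₂ t₃ C₁ C₂ C₃ : ℝ} (h₀₁ : t₀ ≤ t₁)
    (h₁₂ : t₁ ≤ t₂) (h₂₃ : t₂ ≤ t₃) (hf₁ : ∀ y ∈ Ioo t₀ t₁, f y = C₁)
    (hf₂ : ∀ y ∈ Ioo t₁ t₂, f y = C₂) (hf₃ : ∀ y ∈ Ioo t₂ t₃, f y = C₃) :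
    ∫ y in Icc t₀ t₃, f y = C₁ * (t₁ - t₀) + C₂ * (t₂ - t₁) + C₃ * (t₃ - t₂) := by
  have hi₁ := intervalIntegrable_of_eqOn_Ioo h₀₁ hf₁
  have hi₂ := intervalIntegrable_of_eqOn_Ioo h₁₂ hf₂
  have hi₃ := intervalIntegrable_of_eqOn_Ioo h₂₃ hf₃
  rw [integral_Icc_eq_integral_Ioc, ← intervalIntegral.integral_of_le (h₀₁.trans (h₁₂.trans h₂₃)),
    ← intervalIntegral.integral_add_adjacent_intervals (hi₁.trans hi₂) hi₃,
    ← intervalIntegral.integral_add_adjacent_intervals hi₁ hi₂,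
    intervalIntegral_eq_of_eqOn_Ioo h₀₁ hf₁, intervalIntegral_eq_of_eqOn_Ioo h₁₂ hf₂,
    intervalIntegral_eq_of_eqOn_Ioo h₂₃ hf₃]

end StepFunctions

lemma mul_mul_eq_zero_of_bipartite {α M : Type*} [LinearOrder α] [MulZeroClass M]
    {f : α → α → M} {S : Set α} (b : α)
    (hf : ∀ x ∈ S, ∀ y ∈ S, (x ≤ b ∧ y ≤ b) ∨ (b ≤ x ∧ b ≤ y) → f x y = 0)
    {x y z : α} (hx : x ∈ S) (hy : y ∈ S) (hz : z ∈ S) : f x y * f y z * f z x = 0 := by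
  rcases le_total x b with hxb | hxb <;> rcases le_total y b with hyb | hyb <;>
    rcases le_total z b with hzb | hzb <;>
    first
    | rw [hf x hx y hy (by tauto), zero_mul, zero_mul]
    | rw [hf y hy z hz (by tauto), mul_zero, zero_mul]
    | rw [hf z hz x hx (by tauto), mul_zero]

-- `abbrev`s, so that `scallopShape` picks up the same `Decidable` instances as `gScallop`
-- and `gScallop_eq_scallopShape` holds by `rfl`.
abbrev ScallopSeparated (ℓ : ℕ) (c x y : ℝ) : Prop :=
  ∃ k : ℕ, 1 ≤ k ∧ k ≤ ℓ - 1 ∧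
    ((x < (k : ℝ) * c ∧ (k : ℝ) * c < y) ∨ (y < (k : ℝ) * c ∧ (k : ℝ) * c < x))

abbrev ScallopBlock (ℓ : ℕ) (c x y : ℝ) : Prop :=
  (((ℓ : ℝ) - 1) * c < x ∧ x < (1 + ((ℓ : ℝ) - 1) * c) / 2 ∧ (1 + ((ℓ : ℝ) - 1) * c) / 2 < y) ∨
    (((ℓ : ℝ) - 1) * c < y ∧ y < (1 + ((ℓ : ℝ) - 1) * c) / 2 ∧ (1 + ((ℓ : ℝ) - 1) * c) / 2 < x)

open Classical in
noncomputable def scallopShape (ℓ : ℕ) (c v w : ℝ) (x y : ℝ) : ℝ :=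
  if ScallopSeparated ℓ c x y then v else if ScallopBlock ℓ c x y then w else 0

lemma gScallop_eq_scallopShape (ℓ : ℕ) (c p : ℝ) : gScallop ℓ c p = scallopShape ℓ c 1 p := rfl

lemma comp_scallopShape {φ : ℝ → ℝ} (hφ : φ 0 = 0) (ℓ : ℕ) (c v w x y : ℝ) :
    φ (scallopShape ℓ c v w x y) = scallopShape ℓ c (φ v) (φ w) x y := by
  unfold scallopShape
  split_ifs <;> simp only [hφ]

section ScallopShape

variable {ℓ : ℕ} {c v w x y : ℝ}

lemma scallopShape_comm : scallopShape ℓ c v w x y = scallopShape ℓ c v w y x := by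
  have hsep : ScallopSeparated ℓ c x y ↔ ScallopSeparated ℓ c y x := by
    simp only [ScallopSeparated, or_comm]
  classical
  exact if_congr hsep rfl (if_congr or_comm rfl rfl)

lemma cast_le_sub_one_of_le_pred {k : ℕ} (hk₁ : 1 ≤ k) (hk : k ≤ ℓ - 1) : (k : ℝ) ≤ ℓ - 1 := by
  have : (k : ℝ) + 1 ≤ ℓ := by exact_mod_cast (by omega : k + 1 ≤ ℓ)
  linarith

lemma scallopShape_of_lt_of_lt {k : ℕ} (hk₁ : 1 ≤ k) (hk : k ≤ ℓ - 1) (hy : y < k * c)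
    (hx : k * c < x) : scallopShape ℓ c v w x y = v :=
  if_pos ⟨k, hk₁, hk, Or.inr ⟨hy, hx⟩⟩

lemma not_scallopSeparated (hc : 0 ≤ c) (hx : ((ℓ : ℝ) - 1) * c ≤ x)
    (hy : ((ℓ : ℝ) - 1) * c ≤ y) : ¬ ScallopSeparated ℓ c x y := by
  rintro ⟨k, hk₁, hk, ⟨h, -⟩ | ⟨h, -⟩⟩ <;>
  · have := mul_le_mul_of_nonneg_right (cast_le_sub_one_of_le_pred hk₁ hk) hc
    linarith

lemma scallopShape_eq_zero_of_mem_band (hc : 0 < c) {j : ℕ} (hj : j + 1 ≤ ℓ - 1)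
    (hx : x ∈ Ioo (j * c) ((j + 1) * c)) (hy : y ∈ Ioo (j * c) ((j + 1) * c)) :
    scallopShape ℓ c v w x y = 0 := by
  have hjℓ : ((j : ℝ) + 1) * c ≤ ((ℓ : ℝ) - 1) * c := by
    have := cast_le_sub_one_of_le_pred (by omega) hj
    push_cast at this
    exact mul_le_mul_of_nonneg_right this hc.le
  have hcut : ∀ k : ℕ, (k : ℝ) * c < (j + 1) * c → (k : ℝ) * c ≤ j * c := fun k hk => by
    have : k < j + 1 := by exact_mod_cast lt_of_mul_lt_mul_right hk hc.le
    exact mul_le_mul_of_nonneg_right (by exact_mod_cast Nat.lt_succ_iff.1 this) hc.le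
  rw [scallopShape, if_neg, if_neg]
  · rintro (⟨h, -⟩ | ⟨h, -⟩) <;> linarith [hx.2, hy.2]
  · rintro ⟨k, -, -, ⟨h₁, h₂⟩ | ⟨h₁, h₂⟩⟩
    · linarith [hcut k (h₂.trans hy.2), hx.1]
    · linarith [hcut k (h₂.trans hx.2), hy.1]

lemma scallopShape_eq_of_mem_block (hc : 0 ≤ c) (hx : ((ℓ : ℝ) - 1) * c < x)
    (hxb : x < (1 + ((ℓ : ℝ) - 1) * c) / 2) (hy : (1 + ((ℓ : ℝ) - 1) * c) / 2 < y) :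
    scallopShape ℓ c v w x y = w := by
  rw [scallopShape, if_neg (not_scallopSeparated hc hx.le (by linarith)),
    if_pos (Or.inl ⟨hx, hxb, hy⟩)]

lemma scallopShape_eq_zero_of_same_side (hc : 0 ≤ c) (hx : ((ℓ : ℝ) - 1) * c ≤ x)
    (hy : ((ℓ : ℝ) - 1) * c ≤ y)
    (hside : (x ≤ (1 + ((ℓ : ℝ) - 1) * c) / 2 ∧ y ≤ (1 + ((ℓ : ℝ) - 1) * c) / 2) ∨
      ((1 + ((ℓ : ℝ) - 1) * c) / 2 ≤ x ∧ (1 + ((ℓ : ℝ) - 1) * c) / 2 ≤ y)) :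
    scallopShape ℓ c v w x y = 0 := by
  rw [scallopShape, if_neg (not_scallopSeparated hc hx hy), if_neg]
  rintro (⟨-, h₁, h₂⟩ | ⟨-, h₁, h₂⟩) <;> rcases hside with ⟨h₃, h₄⟩ | ⟨h₃, h₄⟩ <;> linarith

lemma integral_scallopShape_of_mem_band (hc : 0 < c) (hℓc : (ℓ : ℝ) * c ≤ 1) {j : ℕ}
    (hj : j + 1 ≤ ℓ - 1) (hx : x ∈ Ioo (j * c) ((j + 1) * c)) :
    ∫ y in Icc (0 : ℝ) 1, scallopShape ℓ c v w x y = v * (1 - c) := by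
  have hjℓ : (j : ℝ) + 1 ≤ ℓ := by exact_mod_cast (by omega : j + 1 ≤ ℓ)
  rw [integral_Icc_eq_of_three_steps (C₁ := v) (C₂ := 0) (C₃ := v) (by positivity)
    (by nlinarith) (by nlinarith) ?_ (fun y hy => scallopShape_eq_zero_of_mem_band hc hj hx hy)]
  · ring
  · rintro y ⟨hy₁, -⟩
    rw [scallopShape_comm]
    exact scallopShape_of_lt_of_lt (k := j + 1) (by omega) hj (by push_cast; exact hx.2)
      (by push_cast; exact hy₁)
  · rintro y ⟨hy₀, hy₁⟩
    have hj₁ : 1 ≤ j := by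
      by_contra! h
      obtain rfl : j = 0 := by omega
      simp only [CharP.cast_eq_zero, zero_mul] at hy₁
      linarith
    exact scallopShape_of_lt_of_lt hj₁ (by omega) hy₁ hx.1

lemma integral_scallopShape_of_corner (hc : 0 < c) (hℓ : 1 ≤ ℓ) (hℓc : (ℓ : ℝ) * c ≤ 1)
    (hx : ((ℓ : ℝ) - 1) * c < x) (hxb : x ≠ (1 + ((ℓ : ℝ) - 1) * c) / 2) :
    ∫ y in Icc (0 : ℝ) 1, scallopShape ℓ c v w x y
      = v * (((ℓ : ℝ) - 1) * c) + w * (1 - ((ℓ : ℝ) - 1) * c) / 2 := by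
  set a := ((ℓ : ℝ) - 1) * c
  have ha₀ : 0 ≤ a := mul_nonneg (sub_nonneg.2 (Nat.one_le_cast.2 hℓ)) hc.le
  have ha₁ : a ≤ (1 + a) / 2 := by linarith
  have ha₂ : (1 + a) / 2 ≤ 1 := by linarith
  have hleft : ∀ y ∈ Ioo 0 a, scallopShape ℓ c v w x y = v := by
    rintro y ⟨hy₀, hya⟩
    have hℓ₂ : 1 ≤ ℓ - 1 := by
      have : (1 : ℝ) < ℓ := by nlinarith
      exact Nat.le_sub_of_add_le (by exact_mod_cast this)
    have hcast : ((ℓ - 1 : ℕ) : ℝ) = ℓ - 1 := by rw [Nat.cast_sub hℓ, Nat.cast_one]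
    exact scallopShape_of_lt_of_lt hℓ₂ le_rfl (by rwa [hcast]) (by rwa [hcast])
  rcases hxb.lt_or_gt with hxb | hxb
  · rw [integral_Icc_eq_of_three_steps (C₁ := v) (C₂ := 0) (C₃ := w) ha₀ ha₁ ha₂ hleft
      (fun y hy => scallopShape_eq_zero_of_same_side hc.le hx.le hy.1.le (Or.inl ⟨hxb.le, hy.2.le⟩))
      (fun y hy => scallopShape_eq_of_mem_block hc.le hx hxb hy.1)]
    ring
  · rw [integral_Icc_eq_of_three_steps (C₁ := v) (C₂ := w) (C₃ := 0) ha₀ ha₁ ha₂ hleft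
      (fun y hy => by rw [scallopShape_comm]; exact scallopShape_eq_of_mem_block hc.le hy.1 hy.2 hxb)
      (fun y hy => scallopShape_eq_zero_of_same_side hc.le hx.le (by linarith [hy.1])
        (Or.inr ⟨hxb.le, hy.1.le⟩))]
    ring

lemma exists_mem_band (hc : 0 < c) (hx₀ : 0 < x) (hx : x < ((ℓ : ℝ) - 1) * c)
    (hxc : x ∉ range fun k : ℕ => (k : ℝ) * c) :
    ∃ j : ℕ, j + 1 ≤ ℓ - 1 ∧ x ∈ Ioo (j * c) ((j + 1) * c) := by
  refine ⟨⌊x / c⌋₊, ?_, ?_, ?_⟩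
  · have h : (⌊x / c⌋₊ : ℝ) < ℓ - 1 :=
      (Nat.floor_le (by positivity)).trans_lt ((div_lt_iff₀ hc).2 hx)
    have : ⌊x / c⌋₊ + 1 < ℓ := by exact_mod_cast (by linarith : (⌊x / c⌋₊ : ℝ) + 1 < ℓ)
    omega
  · refine lt_of_le_of_ne ((le_div_iff₀ hc).1 (Nat.floor_le (by positivity))) ?_
    exact fun h => hxc ⟨_, h⟩
  · exact (div_lt_iff₀ hc).1 (Nat.lt_floor_add_one _)

theorem integral_integral_scallopShape (hc : 0 < c) (hℓ : 1 ≤ ℓ) (hℓc : (ℓ : ℝ) * c ≤ 1) :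
    ∫ x in Icc (0 : ℝ) 1, ∫ y in Icc (0 : ℝ) 1, scallopShape ℓ c v w x y
      = v * (1 - c) * (((ℓ : ℝ) - 1) * c)
        + (v * (((ℓ : ℝ) - 1) * c) + w * (1 - ((ℓ : ℝ) - 1) * c) / 2)
          * (1 - ((ℓ : ℝ) - 1) * c) := by
  set a := ((ℓ : ℝ) - 1) * c
  have ha₀ : 0 ≤ a := mul_nonneg (sub_nonneg.2 (Nat.one_le_cast.2 hℓ)) hc.le
  have hnull : ∀ᵐ x, x ∉ (range fun k : ℕ => (k : ℝ) * c) ∪ {a, (1 + a) / 2} :=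
    measure_eq_zero_iff_ae_notMem.1
      (((countable_range _).union ((countable_singleton _).insert _)).measure_zero volume)
  have hrow : (fun x => ∫ y in Icc (0 : ℝ) 1, scallopShape ℓ c v w x y)
      =ᵐ[volume.restrict (Icc 0 1)]
      fun x => if x < a then v * (1 - c) else v * a + w * (1 - a) / 2 := by
    filter_upwards [ae_restrict_mem measurableSet_Icc, ae_restrict_of_ae hnull] with x hx hxB
    simp only [mem_union, mem_insert_iff, mem_singleton_iff, not_or] at hxB
    obtain ⟨hxc, hxa, hxb⟩ := hxB
    split_ifs with hxa'
    · have hx₀ : 0 < x := hx.1.lt_of_ne fun h => hxc ⟨0, by simp [← h]⟩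
      obtain ⟨j, hj, hxj⟩ := exists_mem_band hc hx₀ hxa' hxc
      exact integral_scallopShape_of_mem_band hc hℓc hj hxj
    · exact integral_scallopShape_of_corner hc hℓ hℓc ((not_lt.1 hxa').lt_of_ne' hxa) hxb
  rw [integral_congr_ae hrow, integral_Icc_eq_of_two_steps ha₀ (by nlinarith)
    (fun x hx => if_pos hx.2) (fun x hx => if_neg (not_lt.2 hx.1.le))]
  ring

end ScallopShape

noncomputable def scallopC (L e : ℝ) : ℝ := (L + √(L * (L - e * (L + 1)))) / (L * (L + 1))

section ScallopC

variable {L e : ℝ}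

lemma scallopC_pos (hL : 0 < L) : 0 < scallopC L e := by
  unfold scallopC
  positivity

lemma mul_scallopC_le_one (hL : 0 < L) (he : 1 - 1 / L ≤ e) : L * scallopC L e ≤ 1 := by
  have hLe : L - 1 ≤ L * e := by
    have := mul_le_mul_of_nonneg_left he hL.le
    rwa [mul_sub, mul_one, mul_one_div_cancel hL.ne'] at this
  have hsqrt : √(L * (L - e * (L + 1))) ≤ 1 :=
    Real.sqrt_le_one.2 (by nlinarith)
  rw [scallopC, mul_div_assoc', div_le_one (by positivity)]
  nlinarith

lemma scallopC_quadratic (hL : 0 < L) (he : e ≤ 1 - 1 / (L + 1)) :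
    e = 2 * L * scallopC L e - L * (L + 1) * scallopC L e ^ 2 := by
  have hLe : e * (L + 1) ≤ L := by
    have := mul_le_mul_of_nonneg_right he (by positivity : 0 ≤ L + 1)
    rw [sub_mul, one_mul, one_div_mul_cancel (by positivity)] at this
    linarith
  have hsq := Real.sq_sqrt (by nlinarith : 0 ≤ L * (L - e * (L + 1)))
  rw [scallopC]
  field_simp
  linear_combination hsq

end ScallopC

lemma I0_zero : I0 0 = 0 := by simp [I0]

lemma I0_one : I0 1 = 0 := by simp [I0]

theorem scallop_minimizer_general (ℓ : ℕ) (e c p : ℝ)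
    (he : e ∈ Icc (1 - 1 / (ℓ : ℝ)) (1 - 1 / ((ℓ : ℝ) + 1)))
    (hc : c = ((ℓ : ℝ) + Real.sqrt ((ℓ : ℝ) * ((ℓ : ℝ) - e * ((ℓ : ℝ) + 1)))) /
      ((ℓ : ℝ) * ((ℓ : ℝ) + 1)))
    (hp : p = 4 * c * (1 - (ℓ : ℝ) * c) / (1 - ((ℓ : ℝ) - 1) * c) ^ 2) :
    edgeDensity (gScallop ℓ c p) = e ∧
    (∫ x in Icc (((ℓ : ℝ) - 1) * c) 1, ∫ y in Icc (((ℓ : ℝ) - 1) * c) 1,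
      ∫ z in Icc (((ℓ : ℝ) - 1) * c) 1,
        gScallop ℓ c p x y * gScallop ℓ c p y z * gScallop ℓ c p z x) = 0 ∧
    rate (gScallop ℓ c p) = (1 - ((ℓ : ℝ) - 1) * c) ^ 2 / 2 * I0 p := by
  obtain ⟨he₁, he₂⟩ := he
  -- for `ℓ = 0` the interval in `he` is `[1, 0]`, as `1 / 0 = 0`
  have hℓ : 1 ≤ ℓ := Nat.one_le_iff_ne_zero.2 fun h => by subst h; norm_num at he₁ he₂; linarith
  have hL : (0 : ℝ) < ℓ := by exact_mod_cast hℓ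
  change c = scallopC ℓ e at hc
  have hc₀ : 0 < c := hc ▸ scallopC_pos hL
  have hℓc : (ℓ : ℝ) * c ≤ 1 := hc ▸ mul_scallopC_le_one hL he₁
  have he : e = 2 * ℓ * c - ℓ * (ℓ + 1) * c ^ 2 := hc ▸ scallopC_quadratic hL he₂
  have hp' : p * (1 - ((ℓ : ℝ) - 1) * c) ^ 2 = 4 * c * (1 - ℓ * c) := by
    rw [hp, div_mul_cancel₀]
    nlinarith
  rw [gScallop_eq_scallopShape]
  refine ⟨?_, ?_, ?_⟩
  · rw [edgeDensity, integral_integral_scallopShape hc₀ hℓ hℓc]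
    linear_combination hp' / 2 - he
  · refine setIntegral_eq_zero_of_forall_eq_zero fun x hx => setIntegral_eq_zero_of_forall_eq_zero
      fun y hy => setIntegral_eq_zero_of_forall_eq_zero fun z hz => ?_
    exact mul_mul_eq_zero_of_bipartite (S := Ici (((ℓ : ℝ) - 1) * c)) _
      (fun u hu u' hu' => scallopShape_eq_zero_of_same_side hc₀.le hu hu') hx.1 hy.1 hz.1
  · simp only [rate, comp_scallopShape I0_zero, I0_one]
    rw [integral_integral_scallopShape hc₀ hℓ hℓc]
    ring

/-- the explicit graphon `g₀` on the `ℓ`-th scallop has edge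
    density `e`, no triangles in the corner `[(ℓ−1)c,1]³`, and rate
    `((1−(ℓ−1)c)²/2)·I₀(p)`. -/
theorem scallop_minimizer (ℓ : ℕ) (hℓ : 2 ≤ ℓ) (e c p : ℝ)
    (he : e ∈ Icc (1 - 1 / (ℓ : ℝ)) (1 - 1 / ((ℓ : ℝ) + 1)))
    (hc : c = ((ℓ : ℝ) + Real.sqrt ((ℓ : ℝ) * ((ℓ : ℝ) - e * ((ℓ : ℝ) + 1)))) /
      ((ℓ : ℝ) * ((ℓ : ℝ) + 1)))
    (hp : p = 4 * c * (1 - (ℓ : ℝ) * c) / (1 - ((ℓ : ℝ) - 1) * c) ^ 2) :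
    edgeDensity (gScallop ℓ c p) = e ∧
    (∫ x in Icc (((ℓ : ℝ) - 1) * c) 1, ∫ y in Icc (((ℓ : ℝ) - 1) * c) 1,
      ∫ z in Icc (((ℓ : ℝ) - 1) * c) 1,
        gScallop ℓ c p x y * gScallop ℓ c p y z * gScallop ℓ c p z x) = 0 ∧
    rate (gScallop ℓ c p) = (1 - ((ℓ : ℝ) - 1) * c) ^ 2 / 2 * I0 p :=
  scallop_minimizer_general ℓ e c p he hc hp
end

section
/- Let 0 < e < 1/2 and 0 < ε < 2e, and define the graphon g by g(x,y) = 2e − ε if x < 1/2 < y or y < 1/2 < x, and g(x,y) = ε otherwise. Then e(g) = e and t(g) = e³ − (e − ε)³. -/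
open MeasureTheory Real Set Filter

/-- The perturbed bipartite graphon: `2e − ε` on `{x < 1/2 < y} ∪ {y < 1/2 < x}`
    and `ε` elsewhere. -/
noncomputable def gEps (e ε : ℝ) : ℝ → ℝ → ℝ := fun x y =>
  if (x < 1 / 2 ∧ 1 / 2 < y) ∨ (y < 1 / 2 ∧ 1 / 2 < x) then 2 * e - ε else ε

/-!
Off the null lines `x = 1/2` and `y = 1/2`, `gEps e ε` is the two-block step function with value
`ε` on the diagonal blocks and `2e − ε` on the off-diagonal ones. Each integral over `[0, 1]` of a
function of the block label is the average of its two values, so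
`e(g) = (2ε + 2(2e − ε)) / 4 = e` and `t(g) = (2ε³ + 6ε(2e − ε)²) / 8 = e³ − (e − ε)³`.
-/

theorem setIntegral_Icc_comp_decide_lt {E : Type*} [NormedAddCommGroup E] [NormedSpace ℝ E]
    [CompleteSpace E] {a m b : ℝ} (ham : a ≤ m) (hmb : m ≤ b) (F : Bool → E) :
    ∫ x in Icc a b, F (decide (x < m)) = (m - a) • F true + (b - m) • F false := by
  have hlow : EqOn (fun x => F (decide (x < m))) (fun _ => F true) (Ico a m) :=
    fun x hx => by simp [hx.2]
  have hhigh : EqOn (fun x => F (decide (x < m))) (fun _ => F false) (Icc m b) :=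
    fun x hx => by simp [not_lt.mpr hx.1]
  rw [← Ico_union_Icc_eq_Icc ham hmb,
    setIntegral_union (Set.disjoint_left.mpr fun x hx hx' => hx'.1.not_gt hx.2) measurableSet_Icc
      ((integrableOn_const (by simp)).congr_fun hlow.symm measurableSet_Ico)
      ((integrableOn_const (by simp)).congr_fun hhigh.symm measurableSet_Icc),
    setIntegral_congr_fun measurableSet_Ico hlow, setIntegral_congr_fun measurableSet_Icc hhigh,
    setIntegral_const, setIntegral_const, Real.volume_real_Ico_of_le ham,
    Real.volume_real_Icc_of_le hmb]

theorem setIntegral_unitInterval_comp_decide_lt_half (F : Bool → ℝ) :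
    ∫ x in Icc (0 : ℝ) 1, F (decide (x < 1 / 2)) = (F true + F false) / 2 := by
  rw [setIntegral_Icc_comp_decide_lt (by norm_num) (by norm_num)]
  simp only [smul_eq_mul]
  ring

theorem setIntegral_unitInterval_comp_decide_lt_half₂ (W : Bool → Bool → ℝ) :
    ∫ x in Icc (0 : ℝ) 1, ∫ y in Icc (0 : ℝ) 1, W (decide (x < 1 / 2)) (decide (y < 1 / 2)) =
      (∑ i, ∑ j, W i j) / 4 := by
  simp only [setIntegral_unitInterval_comp_decide_lt_half (W _)]
  rw [setIntegral_unitInterval_comp_decide_lt_half (fun i => (W i true + W i false) / 2)]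
  simp only [Fintype.sum_bool]
  ring

theorem setIntegral_unitInterval_comp_decide_lt_half₃ (T : Bool → Bool → Bool → ℝ) :
    ∫ x in Icc (0 : ℝ) 1, ∫ y in Icc (0 : ℝ) 1, ∫ z in Icc (0 : ℝ) 1,
        T (decide (x < 1 / 2)) (decide (y < 1 / 2)) (decide (z < 1 / 2)) =
      (∑ i, ∑ j, ∑ k, T i j k) / 8 := by
  simp only [setIntegral_unitInterval_comp_decide_lt_half (T _ _)]
  rw [setIntegral_unitInterval_comp_decide_lt_half₂
    (fun i j => (T i j true + T i j false) / 2)]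
  simp only [Fintype.sum_bool]
  ring

noncomputable def twoBlockGraphon (w : Bool → Bool → ℝ) : ℝ → ℝ → ℝ :=
  fun x y => w (decide (x < 1 / 2)) (decide (y < 1 / 2))

theorem edgeDensity_twoBlockGraphon (w : Bool → Bool → ℝ) :
    edgeDensity (twoBlockGraphon w) = (∑ i, ∑ j, w i j) / 4 :=
  setIntegral_unitInterval_comp_decide_lt_half₂ w

theorem triangleDensity_twoBlockGraphon (w : Bool → Bool → ℝ) :
    triangleDensity (twoBlockGraphon w) = (∑ i, ∑ j, ∑ k, w i j * w j k * w k i) / 8 :=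
  setIntegral_unitInterval_comp_decide_lt_half₃ fun i j k => w i j * w j k * w k i

theorem edgeDensity_congr_of_ne {f g : ℝ → ℝ → ℝ} (p : ℝ)
    (h : ∀ x y, x ≠ p → y ≠ p → f x y = g x y) : edgeDensity f = edgeDensity g :=
  integral_congr_ae <| (Measure.ae_ne _ p).mono fun x hx =>
    integral_congr_ae <| (Measure.ae_ne _ p).mono fun y hy => h x y hx hy

theorem triangleDensity_congr_of_ne {f g : ℝ → ℝ → ℝ} (p : ℝ)
    (h : ∀ x y, x ≠ p → y ≠ p → f x y = g x y) : triangleDensity f = triangleDensity g :=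
  integral_congr_ae <| (Measure.ae_ne _ p).mono fun x hx =>
    integral_congr_ae <| (Measure.ae_ne _ p).mono fun y hy =>
      integral_congr_ae <| (Measure.ae_ne _ p).mono fun z hz => by
        dsimp only
        rw [h x y hx hy, h y z hy hz, h z x hz hx]

theorem gEps_eq_twoBlockGraphon (e ε x y : ℝ) (hx : x ≠ 1 / 2) (hy : y ≠ 1 / 2) :
    gEps e ε x y = twoBlockGraphon (fun i j => if i = j then ε else 2 * e - ε) x y := by
  rcases hx.lt_or_gt with hx | hx <;> rcases hy.lt_or_gt with hy | hy <;>
    simp only [gEps, twoBlockGraphon, hx, hy, hx.not_gt, hy.not_gt, decide_true, decide_false,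
      and_true, and_false, or_false, false_or, if_true, if_false, Bool.true_eq_false,
      Bool.false_eq_true]

theorem perturbed_bipartite_densities_general (e ε : ℝ) :
    edgeDensity (gEps e ε) = e ∧ triangleDensity (gEps e ε) = e ^ 3 - (e - ε) ^ 3 := by
  rw [edgeDensity_congr_of_ne _ (gEps_eq_twoBlockGraphon e ε),
    triangleDensity_congr_of_ne _ (gEps_eq_twoBlockGraphon e ε),
    edgeDensity_twoBlockGraphon, triangleDensity_twoBlockGraphon]
  simp only [Fintype.sum_bool, if_true, Bool.true_eq_false, Bool.false_eq_true, if_false]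
  constructor <;> ring

/-- for `0 < e < 1/2` and `0 < ε < 2e`, the perturbed bipartite
    graphon has edge density `e` and triangle density `e³ − (e − ε)³`. -/
theorem perturbed_bipartite_densities (e ε : ℝ) (he0 : 0 < e) (he : e < 1 / 2)
    (hε0 : 0 < ε) (hε : ε < 2 * e) :
    edgeDensity (gEps e ε) = e ∧ triangleDensity (gEps e ε) = e ^ 3 - (e - ε) ^ 3 :=
  perturbed_bipartite_densities_general e ε
end

section
/- Let 0 < e < 1/2 and 0 < ε < e, and define the graphon g by g(x,y) = 2e − ε if x < 1/2 < y or y < 1/2 < x, and g(x,y) = ε otherwise. Define h(x,y) = ∫₀¹ g(x,z) g(y,z) dz and λ₂ = [I₀'(2e−ε) − I₀'(ε)]/(6(e−ε)²), where I₀'(u) = (1/2)[ln u − ln(1−u)]. Then there exists λ₁ ∈ ℝ such that for almost every (x,y) ∈ [0,1]², I₀'(g(x,y)) = −λ₁ − 3λ₂·h(x,y). -/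
/-! Off the lines `x = 1/2` and `y = 1/2`, `g` is `ε` within the two halves of `[0,1]` and
`2e − ε` across them, and so is `h` a two-valued function: `(ε² + (2e − ε)²)/2` within and
`ε(2e − ε)` across. The Euler–Lagrange equation is then a pair of linear equations in `λ₁`; the
cross one fixes `λ₁`, and the other holds because the two values of `h` differ by `2(e − ε)²`,
which is what `λ₂` is normalised by. -/

open MeasureTheory Real Set Filter

instance : NullSingletonClass unitMeasure := Measure.restrict.instNullSingletonClass _

lemma setIntegral_Icc_ite_lt {t : ℝ} (ht₀ : 0 ≤ t) (ht₁ : t ≤ 1) (c₁ c₂ : ℝ) :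
    ∫ z in Icc (0 : ℝ) 1, (if z < t then c₁ else c₂) = t * c₁ + (1 - t) * c₂ := by
  have hdisj : Disjoint (Ico (0 : ℝ) t) (Icc t 1) :=
    Set.disjoint_left.2 fun z hz hz' => (not_le.2 hz.2) hz'.1
  have h₁ : EqOn (fun z : ℝ => if z < t then c₁ else c₂) (fun _ => c₁) (Ico 0 t) :=
    fun z hz => if_pos hz.2
  have h₂ : EqOn (fun z : ℝ => if z < t then c₁ else c₂) (fun _ => c₂) (Icc t 1) :=
    fun z hz => if_neg (not_lt.2 hz.1)
  rw [← Ico_union_Icc_eq_Icc ht₀ ht₁,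
    setIntegral_union hdisj measurableSet_Icc
      ((integrableOn_const (by simp)).congr_fun h₁.symm measurableSet_Ico)
      ((integrableOn_const (by simp)).congr_fun h₂.symm measurableSet_Icc),
    setIntegral_congr_fun measurableSet_Ico h₁, setIntegral_congr_fun measurableSet_Icc h₂,
    setIntegral_const, setIntegral_const, Real.volume_real_Ico_of_le ht₀,
    Real.volume_real_Icc_of_le ht₁]
  simp only [smul_eq_mul, sub_zero]

section gEps

variable (e ε : ℝ) {x y : ℝ}

lemma gEps_of_ne_half (hx : x ≠ 1 / 2) (hy : y ≠ 1 / 2) :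
    gEps e ε x y = if (x < 1 / 2 ↔ y < 1 / 2) then ε else 2 * e - ε := by
  unfold gEps
  split_ifs <;> grind

lemma integral_gEps_mul_gEps (hx : x ≠ 1 / 2) (hy : y ≠ 1 / 2) :
    ∫ z in Icc (0 : ℝ) 1, gEps e ε x z * gEps e ε y z =
      if (x < 1 / 2 ↔ y < 1 / 2) then (ε ^ 2 + (2 * e - ε) ^ 2) / 2 else ε * (2 * e - ε) := by
  have hstep : ∀ᵐ z ∂volume.restrict (Icc (0 : ℝ) 1), gEps e ε x z * gEps e ε y z =
      if z < 1 / 2 then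
        (if x < 1 / 2 then ε else 2 * e - ε) * (if y < 1 / 2 then ε else 2 * e - ε)
      else (if x < 1 / 2 then 2 * e - ε else ε) * (if y < 1 / 2 then 2 * e - ε else ε) := by
    filter_upwards [ae_restrict_of_ae (Measure.ae_ne volume (1 / 2 : ℝ))] with z hz
    rw [gEps_of_ne_half e ε hx hz, gEps_of_ne_half e ε hy hz]
    split_ifs <;> first | rfl | tauto
  rw [integral_congr_ae hstep, setIntegral_Icc_ite_lt (by norm_num) (by norm_num)]
  split_ifs <;> first | ring1 | tauto

end gEps

theorem perturbed_bipartite_euler_lagrange_general (e ε : ℝ) (hε : ε < e) :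
    ∃ lam₁ : ℝ, ∀ᵐ q ∂(unitMeasure.prod unitMeasure),
      I0d (gEps e ε q.1 q.2) = -lam₁ -
        3 * ((I0d (2 * e - ε) - I0d ε) / (6 * (e - ε) ^ 2)) *
          (∫ z in Icc (0 : ℝ) 1, gEps e ε q.1 z * gEps e ε q.2 z) := by
  have hlam₂ : 3 * ((I0d (2 * e - ε) - I0d ε) / (6 * (e - ε) ^ 2)) *
      ((ε ^ 2 + (2 * e - ε) ^ 2) / 2 - ε * (2 * e - ε)) = I0d (2 * e - ε) - I0d ε := by
    have : e - ε ≠ 0 := (sub_pos.2 hε).ne'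
    field_simp
    ring
  refine ⟨-I0d (2 * e - ε) -
    3 * ((I0d (2 * e - ε) - I0d ε) / (6 * (e - ε) ^ 2)) * (ε * (2 * e - ε)), ?_⟩
  have hfst := (Measure.quasiMeasurePreserving_fst (ν := unitMeasure)).ae
    (Measure.ae_ne unitMeasure (1 / 2 : ℝ))
  have hsnd := (Measure.quasiMeasurePreserving_snd (μ := unitMeasure)).ae
    (Measure.ae_ne unitMeasure (1 / 2 : ℝ))
  filter_upwards [hfst, hsnd] with q hx hy
  rw [integral_gEps_mul_gEps e ε hx hy, gEps_of_ne_half e ε hx hy]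
  split_ifs
  · linear_combination hlam₂
  · ring

/-- the perturbed bipartite graphon satisfies the Euler–Lagrange
    equation `I₀'(g(x,y)) = −λ₁ − 3λ₂ h(x,y)` a.e., where
    `h(x,y) = ∫₀¹ g(x,z)g(y,z) dz` and `λ₂ = [I₀'(2e−ε) − I₀'(ε)]/(6(e−ε)²)`. -/
theorem perturbed_bipartite_euler_lagrange (e ε : ℝ) (he0 : 0 < e) (he : e < 1 / 2)
    (hε0 : 0 < ε) (hε : ε < e) :
    ∃ lam₁ : ℝ, ∀ᵐ q ∂(unitMeasure.prod unitMeasure),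
      I0d (gEps e ε q.1 q.2) = -lam₁ -
        3 * ((I0d (2 * e - ε) - I0d ε) / (6 * (e - ε) ^ 2)) *
          (∫ z in Icc (0 : ℝ) 1, gEps e ε q.1 z * gEps e ε q.2 z) :=
  perturbed_bipartite_euler_lagrange_general e ε hε
end

section
/- Let g be a graphon with t(g) = 0. Then the two-dimensional Lebesgue measure of the set { (x,y) ∈ [0,1]² : g(x,y) = 0 } is at least 1/2. -/
/-! Let `S` be the support of `g` and `d x` the measure of the neighbourhood `{y | (x, y) ∈ S}`.
Since `t(g) = 0`, almost every edge `(x, y) ∈ S` has almost disjoint neighbourhoods, so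
`d x + d y ≤ 1`. Integrating this over `S` and using the symmetry of `S` gives `2 ∫ d² ≤ |S|`,
while `|S| = ∫ d` and Cauchy–Schwarz gives `|S|² ≤ ∫ d²`. Hence `2 |S|² ≤ |S|`, i.e. `|S| ≤ 1/2`:
this is Mantel's theorem for the support of `g`. -/

open MeasureTheory Real Set Filter

open scoped ENNReal

lemma ENNReal.le_half_of_two_mul_sq_le {a : ℝ≥0∞} (ha : a ≠ ∞) (h : 2 * a ^ 2 ≤ a) :
    a ≤ 1 / 2 := by
  lift a to NNReal using ha
  rw [one_div, ← ENNReal.coe_two, ← ENNReal.coe_inv two_ne_zero, ENNReal.coe_le_coe]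
  rw [← ENNReal.coe_two, ← ENNReal.coe_pow, ← ENNReal.coe_mul, ENNReal.coe_le_coe] at h
  rw [← NNReal.coe_le_coe] at h ⊢
  push_cast at h ⊢
  nlinarith [a.2]

namespace MeasureTheory

variable {α β : Type*} [MeasurableSpace α] [MeasurableSpace β] {μ : Measure α} {ν : Measure β}

lemma sq_lintegral_le_lintegral_sq [IsProbabilityMeasure μ] {f : α → ℝ≥0∞}
    (hf : AEMeasurable f μ) : (∫⁻ x, f x ∂μ) ^ 2 ≤ ∫⁻ x, f x ^ 2 ∂μ := by
  have h := ENNReal.lintegral_mul_le_Lp_mul_Lq μ Real.HolderConjugate.two_two hf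
    (aemeasurable_const (b := (1 : ℝ≥0∞)))
  simp only [Pi.mul_apply, mul_one, lintegral_const, measure_univ, ENNReal.rpow_two, one_pow,
    ENNReal.one_rpow, one_div] at h
  rwa [ENNReal.le_rpow_inv_iff two_pos, ENNReal.rpow_two] at h

/-- Mantel's theorem for a measurable graph `S` on a probability space: the hypothesis says that
almost no edge lies in a triangle. -/
theorem prod_apply_le_half_of_aedisjoint_sections [IsProbabilityMeasure μ] {S : Set (α × α)}
    (hS : MeasurableSet S) (hsymm : Prod.swap ⁻¹' S = S)
    (htri : ∀ᵐ p ∂μ.prod μ, p ∈ S → AEDisjoint μ (Prod.mk p.1 ⁻¹' S) (Prod.mk p.2 ⁻¹' S)) :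
    μ.prod μ S ≤ 1 / 2 := by
  set d : α → ℝ≥0∞ := fun x => μ (Prod.mk x ⁻¹' S)
  have hd : Measurable d := measurable_measure_prodMk_left hS
  have hdeg : ∀ᵐ p ∂μ.prod μ, p ∈ S → d p.1 + d p.2 ≤ 1 := by
    filter_upwards [htri] with p hp hpS
    rw [← measure_union₀ (measurable_prodMk_left hS).nullMeasurableSet (hp hpS)]
    exact prob_le_one
  have hfst : ∫⁻ p in S, d p.1 ∂μ.prod μ = ∫⁻ x, d x ^ 2 ∂μ := by
    rw [← lintegral_indicator hS,
      lintegral_prod (fun p => S.indicator (fun p => d p.1) p)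
        ((hd.comp measurable_fst).indicator hS).aemeasurable]
    refine lintegral_congr fun x => ?_
    simp_rw [← Set.indicator_comp_right (Prod.mk x)]
    exact (lintegral_indicator_const (measurable_prodMk_left hS) (d x)).trans (sq (d x)).symm
  have hsnd : ∫⁻ p in S, d p.2 ∂μ.prod μ = ∫⁻ p in S, d p.1 ∂μ.prod μ := by
    rw [← lintegral_indicator hS, ← lintegral_indicator hS, ← lintegral_prod_swap]
    refine lintegral_congr fun p => ?_
    rw [← Set.indicator_comp_right, hsymm]
    rfl
  have hS_eq : μ.prod μ S = ∫⁻ x, d x ∂μ := Measure.prod_apply hS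
  refine ENNReal.le_half_of_two_mul_sq_le (measure_ne_top _ _) ?_
  calc 2 * μ.prod μ S ^ 2 ≤ 2 * ∫⁻ x, d x ^ 2 ∂μ := by
        rw [hS_eq]; gcongr; exact sq_lintegral_le_lintegral_sq hd.aemeasurable
    _ = ∫⁻ p in S, (d p.1 + d p.2) ∂μ.prod μ := by
        rw [lintegral_add_left (f := fun p : α × α => d p.1) (hd.comp measurable_fst)
          (fun p => d p.2), hsnd, hfst, two_mul]
    _ ≤ ∫⁻ p in S, 1 ∂μ.prod μ := setLIntegral_mono_ae measurable_const.aemeasurable hdeg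
    _ = μ.prod μ S := setLIntegral_one S

lemma ae_ae_eq_zero_of_integral_integral_eq_zero [SFinite μ] [SFinite ν] {f : α × β → ℝ}
    (hf : Integrable f (μ.prod ν)) (hf0 : 0 ≤ f) (h : ∫ x, ∫ y, f (x, y) ∂ν ∂μ = 0) :
    ∀ᵐ x ∂μ, ∀ᵐ y ∂ν, f (x, y) = 0 := by
  rw [← integral_prod f hf, integral_eq_zero_iff_of_nonneg hf0 hf] at h
  exact Measure.ae_ae_of_ae_prod h

lemma ae_ae_triangle_eq_zero_of_integral_eq_zero [IsFiniteMeasure μ] {g : α → α → ℝ}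
    (hgm : Measurable (Function.uncurry g)) (hg : ∀ x y, g x y ∈ Set.Icc (0 : ℝ) 1)
    (h : ∫ x, ∫ y, ∫ z, g x y * g y z * g z x ∂μ ∂μ ∂μ = 0) :
    ∀ᵐ p ∂μ.prod μ, ∀ᵐ z ∂μ, g p.1 p.2 * g p.2 z * g z p.1 = 0 := by
  set T : (α × α) × α → ℝ := fun q => g q.1.1 q.1.2 * g q.1.2 q.2 * g q.2 q.1.1
  have hT_mem : ∀ q, T q ∈ Set.Icc 0 1 := fun q =>
    unitInterval.mul_mem (unitInterval.mul_mem (hg _ _) (hg _ _)) (hg _ _)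
  have hT : Integrable T ((μ.prod μ).prod μ) := by
    refine Integrable.of_bound (C := 1) (Measurable.aestronglyMeasurable ?_)
      (ae_of_all _ fun q => ?_)
    · exact ((hgm.comp (measurable_fst.fst.prodMk measurable_fst.snd)).mul
        (hgm.comp (measurable_fst.snd.prodMk measurable_snd))).mul
        (hgm.comp (measurable_snd.prodMk measurable_fst.fst))
    · rw [Real.norm_of_nonneg (hT_mem q).1]
      exact (hT_mem q).2
  refine ae_ae_eq_zero_of_integral_integral_eq_zero hT (fun q => (hT_mem q).1) ?_
  rwa [integral_prod _ hT.integral_prod_left]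

end MeasureTheory

instance : IsProbabilityMeasure unitMeasure := ⟨by simp [unitMeasure]⟩

/-- a triangle-free graphon vanishes on a subset of `[0,1]²` of
    measure at least `1/2`. -/
theorem zero_set_of_triangle_free (g : ℝ → ℝ → ℝ) (hg : IsGraphon g)
    (hgt : triangleDensity g = 0) :
    (1 / 2 : ENNReal) ≤
      volume {q : ℝ × ℝ | q ∈ Icc (0 : ℝ) 1 ×ˢ Icc (0 : ℝ) 1 ∧ g q.1 q.2 = 0} := by
  obtain ⟨hgm, hsym, hg01⟩ := hg
  set S : Set (ℝ × ℝ) := {p | g p.1 p.2 ≠ 0}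
  have hS : MeasurableSet S := hgm (measurableSet_singleton 0).compl
  have hsymm : Prod.swap ⁻¹' S = S := by ext p; simp [S, hsym p.1 p.2]
  have htri : ∀ᵐ p ∂unitMeasure.prod unitMeasure, p ∈ S →
      AEDisjoint unitMeasure (Prod.mk p.1 ⁻¹' S) (Prod.mk p.2 ⁻¹' S) := by
    filter_upwards [ae_ae_triangle_eq_zero_of_integral_eq_zero hgm hg01 hgt] with p hp hpS
    refine measure_mono_null (fun z ⟨h1, h2⟩ => ?_) (ae_iff.mp hp)
    exact mul_ne_zero (mul_ne_zero hpS h2) (hsym z p.1 ▸ h1)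
  have hzero : volume {q : ℝ × ℝ | q ∈ Icc (0 : ℝ) 1 ×ˢ Icc (0 : ℝ) 1 ∧ g q.1 q.2 = 0} =
      unitMeasure.prod unitMeasure Sᶜ := by
    rw [unitMeasure, Measure.prod_restrict, ← Measure.volume_eq_prod,
      Measure.restrict_apply hS.compl]
    congr 1
    ext q
    simp [S, and_comm]
  rw [hzero, prob_compl_eq_one_sub hS]
  calc (1 / 2 : ℝ≥0∞) = 1 - 1 / 2 := by norm_num
    _ ≤ 1 - unitMeasure.prod unitMeasure S :=
        tsub_le_tsub_left (prod_apply_le_half_of_aedisjoint_sections hS hsymm htri) 1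
end
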